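/- arXiv:1406.4022 — 3 statements merged into one kernel-verified Lean document; each statement's English description precedes it below -/
import Mathlib

section
/- Let {a_n} and {b_n} be sequences (in a commutative ring containing q and the inverses of the q-integers [k]_q) related by the q-binomial transform b_n = ∑_{k=1}^n [n choose k]_q (-1)^k q^{binom(k,2)} a_k. Then for any positive integer r, ∑_{k=1}^n [n choose k]_q (-1)^k q^{binom(k,2)+rk} a_k / [k]_q^r = ∑_{1≤k_1≤k_2≤⋯≤k_r≤n} (∏_{i=1}^r q^{k_i}/[k_i]_q) · b_{k_1}. -/
/-!
The `q`-hockey-stick identity `∑_{m=k}^n q^m/[m]_q [m choose k]_q = q^k/[k]_q [n choose k]_q`,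
obtained by telescoping the `q`-Pascal rule, lets one swap the two summations in
`∑_k [n choose k]_q (-1)^k q^{binom(k,2)} (q^k/[k]_q) c_k`: the result is
`∑_{m=1}^n q^m/[m]_q` times the `q`-binomial transform of `c` at `m`. Peeling off one factor
`q^k/[k]_q` at a time turns the left-hand side into `r` nested sums ending in `b_{k_1}`, and
these are the sum over weakly increasing tuples, split according to their largest entry.
-/

open scoped Classical

/-- The Gaussian `q`-binomial coefficient `[n choose k]_q = ∏_{i=1}^k (1-q^{n-k+i})/(1-q^i)`. -/
noncomputable def qbinom (q : ℂ) (n k : ℕ) : ℂ :=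
  ∏ i ∈ Finset.range k, (1 - q ^ (n - k + 1 + i)) / (1 - q ^ (1 + i))

/-- The `q`-integer `[k]_q = (1-q^k)/(1-q)`. -/
noncomputable def qint (q : ℂ) (k : ℕ) : ℂ := (1 - q ^ k) / (1 - q)

open Finset

theorem qbinom_succ_succ (q : ℂ) {n k : ℕ} (hk : k ≤ n) :
    qbinom q (n + 1) (k + 1) = qbinom q n k * ((1 - q ^ (n + 1)) / (1 - q ^ (k + 1))) := by
  rw [qbinom, prod_range_succ, Nat.add_sub_add_right, qbinom, add_comm 1 k,
    show n - k + 1 + k = n + 1 by omega]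

theorem qbinom_succ_right_eq (q : ℂ) {n k : ℕ} (hk : k < n) :
    qbinom q n (k + 1) = qbinom q n k * ((1 - q ^ (n - k)) / (1 - q ^ (k + 1))) := by
  simp only [qbinom, prod_div_distrib]
  rw [prod_range_succ', prod_range_succ _ k, mul_div_mul_comm]
  congr 3
  · exact funext fun i => by rw [show n - (k + 1) + 1 + (i + 1) = n - k + 1 + i by omega]
  · rw [show n - (k + 1) + 1 + 0 = n - k by omega]
  · rw [add_comm]

theorem qbinom_succ_sub_qbinom (q : ℂ) {n k : ℕ} (hk : k < n) (hq : q ^ (k + 1) ≠ 1) :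
    qbinom q (n + 1) (k + 1) - qbinom q n (k + 1) = q ^ (n - k) * qbinom q n k := by
  have hden : 1 - q ^ (k + 1) ≠ 0 := sub_ne_zero.mpr hq.symm
  rw [qbinom_succ_succ q hk.le, qbinom_succ_right_eq q hk,
    show n + 1 = n - k + (k + 1) by omega, pow_add]
  field_simp
  ring

theorem sum_Icc_pow_div_qint_mul_qbinom {q : ℂ} {k n : ℕ} (hk : 1 ≤ k) (hkn : k ≤ n)
    (hq : ∀ i, 1 ≤ i → i ≤ n → q ^ i ≠ 1) :
    ∑ m ∈ Icc k n, q ^ m / qint q m * qbinom q m k = q ^ k / qint q k * qbinom q n k := by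
  induction n, hkn using Nat.le_induction with
  | base => rw [Icc_self, sum_singleton]
  | succ n hkn ih =>
    obtain ⟨j, rfl⟩ : ∃ j, k = j + 1 := ⟨k - 1, by omega⟩
    have hn : 1 - q ^ (n + 1) ≠ 0 := sub_ne_zero.mpr (hq (n + 1) (by omega) le_rfl).symm
    have hj : 1 - q ^ (j + 1) ≠ 0 := sub_ne_zero.mpr (hq (j + 1) (by omega) (by omega)).symm
    have htel : q ^ (n + 1) / qint q (n + 1) * qbinom q (n + 1) (j + 1)
        = q ^ (j + 1) / qint q (j + 1) * (qbinom q (n + 1) (j + 1) - qbinom q n (j + 1)) := by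
      rw [qbinom_succ_sub_qbinom q hkn (hq (j + 1) (by omega) (by omega)),
        qbinom_succ_succ q (by omega), qint, qint]
      field_simp
      rw [show n + 1 = n - j + (j + 1) by omega, pow_add]
      ring
    rw [sum_Icc_succ_top (by omega), ih fun i hi hin => hq i hi (by omega), htel]
    ring

noncomputable def qbinomTransform (q : ℂ) (a : ℕ → ℂ) (n : ℕ) : ℂ :=
  ∑ k ∈ Icc 1 n, qbinom q n k * (-1) ^ k * q ^ k.choose 2 * a k

theorem qbinomTransform_pow_div_qint_mul {q : ℂ} {n : ℕ} (hq : ∀ i, 1 ≤ i → i ≤ n → q ^ i ≠ 1)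
    (c : ℕ → ℂ) :
    qbinomTransform q (fun k => q ^ k / qint q k * c k) n
      = ∑ m ∈ Icc 1 n, q ^ m / qint q m * qbinomTransform q c m := by
  simp only [qbinomTransform, mul_sum]
  rw [sum_comm' (t' := Icc 1 n) (s' := fun k => Icc k n)
    (fun m k => by simp only [mem_Icc]; omega)]
  refine sum_congr rfl fun k hk => ?_
  rw [mem_Icc] at hk
  calc qbinom q n k * (-1) ^ k * q ^ k.choose 2 * (q ^ k / qint q k * c k)
      = q ^ k / qint q k * qbinom q n k * ((-1) ^ k * q ^ k.choose 2 * c k) := by ring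
    _ = _ := by
      rw [← sum_Icc_pow_div_qint_mul_qbinom hk.1 hk.2 hq, sum_mul]
      exact sum_congr rfl fun _ _ => by ring

section MonotoneTuples

variable {α : Type*} [Preorder α] [DecidableLE α] [LocallyFiniteOrder α]

theorem Fin.snoc_mem_filter_monotone_piFinset_Icc_iff {r : ℕ} {a n m : α} {g : Fin r → α} :
    Fin.snoc (α := fun _ => α) g m ∈ (Fintype.piFinset fun _ => Icc a n).filter Monotone ↔
      m ∈ Icc a n ∧ g ∈ (Fintype.piFinset fun _ => Icc a m).filter Monotone := by
  simp only [mem_filter, Fintype.mem_piFinset, mem_Icc, Fin.forall_fin_succ', Fin.snoc_castSucc,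
    Fin.snoc_last]
  constructor
  · rintro ⟨⟨hg, hm⟩, hmono⟩
    refine ⟨hm, fun i => ⟨(hg i).1, ?_⟩, fun i j hij => ?_⟩
    · simpa using hmono (Fin.le_last i.castSucc)
    · simpa using hmono (Fin.castSucc_le_castSucc_iff.mpr hij)
  · rintro ⟨hm, hg, hmono⟩
    refine ⟨⟨fun i => ⟨(hg i).1, (hg i).2.trans hm.2⟩, hm⟩, fun i j hij => ?_⟩
    induction j using Fin.lastCases with
    | last =>
      induction i using Fin.lastCases with
      | last => exact le_rfl
      | cast i => simpa using (hg i).2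
    | cast j =>
      induction i using Fin.lastCases with
      | last => exact absurd hij (by simp)
      | cast i => simpa using hmono (Fin.castSucc_le_castSucc_iff.mp hij)

theorem sum_filter_monotone_piFinset_Icc_succ {M : Type*} [AddCommMonoid M] {r : ℕ} (a n : α)
    (φ : (Fin (r + 1) → α) → M) :
    ∑ f ∈ (Fintype.piFinset fun _ => Icc a n).filter Monotone, φ f
      = ∑ m ∈ Icc a n, ∑ g ∈ (Fintype.piFinset fun _ : Fin r => Icc a m).filter Monotone,
          φ (Fin.snoc g m) := by
  rw [sum_sigma']
  refine sum_nbij' (fun f => ⟨f (Fin.last r), Fin.init f⟩) (fun p => Fin.snoc p.2 p.1)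
    (fun f hf => ?_) (fun p hp => ?_) (fun f _ => Fin.snoc_init_self f)
    (fun p _ => by simp) (fun f _ => by rw [Fin.snoc_init_self])
  · rw [← Fin.snoc_init_self f, Fin.snoc_mem_filter_monotone_piFinset_Icc_iff] at hf
    exact mem_sigma.mpr hf
  · exact Fin.snoc_mem_filter_monotone_piFinset_Icc_iff.mpr (mem_sigma.mp hp)

end MonotoneTuples

theorem qbinomTransform_pow_mul_eq_sum_monotone {q : ℂ} (a : ℕ → ℂ) (r : ℕ) {n : ℕ}
    (hq : ∀ i, 1 ≤ i → i ≤ n → q ^ i ≠ 1) :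
    qbinomTransform q (fun k => (q ^ k / qint q k) ^ (r + 1) * a k) n
      = ∑ f ∈ (Fintype.piFinset fun _ : Fin (r + 1) => Icc 1 n).filter Monotone,
          (∏ i, q ^ f i / qint q (f i)) * qbinomTransform q a (f 0) := by
  induction r generalizing n with
  | zero =>
    simp only [zero_add, pow_one]
    rw [qbinomTransform_pow_div_qint_mul hq, sum_filter_monotone_piFinset_Icc_succ]
    refine sum_congr rfl fun m _ => ?_
    rw [filter_true_of_mem fun f _ => Subsingleton.monotone f, Fintype.piFinset_of_isEmpty,
      univ_unique, sum_singleton, Fin.prod_univ_one, ← Fin.last_zero, Fin.snoc_last]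
  | succ r ih =>
    simp only [pow_succ' _ (r + 1), mul_assoc]
    rw [qbinomTransform_pow_div_qint_mul hq, sum_filter_monotone_piFinset_Icc_succ]
    refine sum_congr rfl fun m hm => ?_
    rw [ih fun i hi him => hq i hi (him.trans (mem_Icc.mp hm).2), mul_sum]
    refine sum_congr rfl fun g _ => ?_
    simp only [Fin.prod_univ_castSucc, Fin.snoc_castSucc, Fin.snoc_last, Fin.snoc_apply_zero]
    ring

theorem stmt_3 (q : ℂ) (a b : ℕ → ℂ)
    (hb : ∀ m : ℕ, b m = ∑ k ∈ Finset.Icc 1 m,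
      qbinom q m k * (-1) ^ k * q ^ (Nat.choose k 2) * a k)
    (n r : ℕ) (hr : 1 ≤ r)
    (hq : ∀ i, 1 ≤ i → i ≤ n → q ^ i ≠ 1) :
    ∑ k ∈ Finset.Icc 1 n,
        qbinom q n k * (-1) ^ k * q ^ (Nat.choose k 2 + r * k) * a k / (qint q k) ^ r
      = ∑ f ∈ (Fintype.piFinset fun _ : Fin r => Finset.Icc 1 n).filter
          (fun f => Monotone f),
          (∏ i : Fin r, q ^ (f i) / qint q (f i)) * b (f ⟨0, by omega⟩) := by
  obtain ⟨r, rfl⟩ : ∃ r', r = r' + 1 := ⟨r - 1, by omega⟩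
  obtain rfl : b = qbinomTransform q a := funext hb
  refine (sum_congr rfl fun k _ => ?_).trans (qbinomTransform_pow_mul_eq_sum_monotone a r hq)
  dsimp only
  rw [pow_add, pow_mul', div_pow]
  ring
end

section
/- For positive integers n, s_1, s_2, the product of single q-harmonic sums satisfies the identity H_n^q(s_1) H_n^q(s_2) = H_n^q(s_1,s_2) + H_n^q(s_2,s_1) + H_n^q(s_1+s_2) + (1-q) H_n^q(s_1+s_2-1), where H_n^q(s) = ∑_{k=1}^n q^{(s-1)k}/[k]_q^s and H_n^q(a,b) = ∑_{1≤j<k≤n} q^{(a-1)j+(b-1)k}/([j]_q^a [k]_q^b). -/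
/-- The single `q`-harmonic sum `H_n^q(s) = ∑_{k=1}^n q^{(s-1)k}/[k]_q^s`. -/
noncomputable def qH1 (q : ℂ) (n s : ℕ) : ℂ :=
  ∑ k ∈ Finset.Icc 1 n, q ^ ((s - 1) * k) / (qint q k) ^ s

/-- The depth-two `q`-harmonic sum `H_n^q(a,b) = ∑_{1≤j<k≤n} q^{(a-1)j+(b-1)k}/([j]_q^a [k]_q^b)`. -/
noncomputable def qH2 (q : ℂ) (n a b : ℕ) : ℂ :=
  ∑ k ∈ Finset.Icc 1 n, ∑ j ∈ Finset.Icc 1 (k - 1),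
    q ^ ((a - 1) * j + (b - 1) * k) / ((qint q j) ^ a * (qint q k) ^ b)

/-! The product of two single sums splits the square `1 ≤ j, k ≤ n` into `j < k`, `j > k`
and the diagonal; the diagonal terms collapse by `q^k + (1 - q) [k]_q = 1`. -/

open Finset

theorem sum_Icc_mul_sum_Icc {R : Type*} [CommRing R] (f g : ℕ → R) (n : ℕ) :
    (∑ k ∈ Icc 1 n, f k) * (∑ k ∈ Icc 1 n, g k)
      = ∑ k ∈ Icc 1 n, ∑ j ∈ Icc 1 (k - 1), f j * g k
        + ∑ k ∈ Icc 1 n, ∑ j ∈ Icc 1 (k - 1), g j * f k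
        + ∑ k ∈ Icc 1 n, f k * g k := by
  induction n with
  | zero => simp
  | succ n ih =>
    simp only [sum_Icc_succ_top (Nat.le_add_left 1 n), Nat.add_sub_cancel]
    linear_combination ih + sum_mul (Icc 1 n) f (g (n + 1)) + sum_mul (Icc 1 n) g (f (n + 1))

noncomputable def qterm (q : ℂ) (s k : ℕ) : ℂ := q ^ ((s - 1) * k) / qint q k ^ s

theorem qH1_eq_sum_qterm (q : ℂ) (n s : ℕ) : qH1 q n s = ∑ k ∈ Icc 1 n, qterm q s k := rfl

theorem qH2_eq_sum_qterm_mul_qterm (q : ℂ) (n a b : ℕ) :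
    qH2 q n a b = ∑ k ∈ Icc 1 n, ∑ j ∈ Icc 1 (k - 1), qterm q a j * qterm q b k := by
  simp only [qH2, qterm, div_mul_div_comm, pow_add]

theorem one_sub_mul_qint {q : ℂ} (hq : q ≠ 1) (k : ℕ) : (1 - q) * qint q k = 1 - q ^ k := by
  rw [qint, mul_div_cancel₀ _ (sub_ne_zero.mpr hq.symm)]

theorem qint_ne_zero {q : ℂ} {k : ℕ} (hq : q ≠ 1) (hk : q ^ k ≠ 1) : qint q k ≠ 0 :=
  div_ne_zero (sub_ne_zero.mpr hk.symm) (sub_ne_zero.mpr hq.symm)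

theorem qterm_mul_qterm {q : ℂ} {k : ℕ} (hk : qint q k ≠ 0) {s₁ s₂ : ℕ} (hs₁ : 1 ≤ s₁)
    (hs₂ : 1 ≤ s₂) :
    qterm q s₁ k * qterm q s₂ k
      = qterm q (s₁ + s₂) k + (1 - q) * qterm q (s₁ + s₂ - 1) k := by
  obtain ⟨a, rfl⟩ := Nat.exists_eq_add_of_le' hs₁
  obtain ⟨b, rfl⟩ := Nat.exists_eq_add_of_le' hs₂
  -- `[k]_q ≠ 0` forces `q ≠ 1`, since `x / 0 = 0`.
  have hq : q ≠ 1 := by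
    rintro rfl
    simp [qint] at hk
  have hqk := one_sub_mul_qint hq k
  simp only [qterm, show a + 1 + (b + 1) - 1 = a + b + 1 by omega, Nat.add_sub_cancel]
  calc q ^ (a * k) / qint q k ^ (a + 1) * (q ^ (b * k) / qint q k ^ (b + 1))
      = q ^ ((a + b) * k) / qint q k ^ (a + b + 2) := by
        rw [div_mul_div_comm, ← pow_add, ← pow_add, add_mul]
        ring_nf
    _ = q ^ ((a + b) * k) / qint q k ^ (a + b + 2) * (q ^ k + (1 - q) * qint q k) := by
        rw [hqk]
        ring
    _ = q ^ ((a + b + 1) * k) / qint q k ^ (a + 1 + (b + 1))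
          + (1 - q) * (q ^ ((a + b) * k) / qint q k ^ (a + b + 1)) := by
        field_simp
        ring

theorem stmt_13_general (n s₁ s₂ : ℕ) (hs₁ : 1 ≤ s₁) (hs₂ : 1 ≤ s₂) (q : ℂ)
    (hq : ∀ i, 1 ≤ i → i ≤ n → q ^ i ≠ 1) :
    qH1 q n s₁ * qH1 q n s₂
      = qH2 q n s₁ s₂ + qH2 q n s₂ s₁ + qH1 q n (s₁ + s₂)
        + (1 - q) * qH1 q n (s₁ + s₂ - 1) := by
  simp only [qH1_eq_sum_qterm, qH2_eq_sum_qterm_mul_qterm]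
  rw [sum_Icc_mul_sum_Icc, mul_sum, add_assoc (_ + _)]
  congr 1
  rw [← sum_add_distrib]
  refine sum_congr rfl fun k hk => ?_
  obtain ⟨hk₁, hkn⟩ := mem_Icc.mp hk
  have hq₁ : q ≠ 1 := by simpa using hq 1 le_rfl (hk₁.trans hkn)
  exact qterm_mul_qterm (qint_ne_zero hq₁ (hq k hk₁ hkn)) hs₁ hs₂

theorem stmt_13 (n s₁ s₂ : ℕ) (hn : 1 ≤ n) (hs₁ : 1 ≤ s₁) (hs₂ : 1 ≤ s₂) (q : ℂ)
    (hq : ∀ i, 1 ≤ i → i ≤ n → q ^ i ≠ 1) :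
    qH1 q n s₁ * qH1 q n s₂
      = qH2 q n s₁ s₂ + qH2 q n s₂ s₁ + qH1 q n (s₁ + s₂)
        + (1 - q) * qH1 q n (s₁ + s₂ - 1) :=
  stmt_13_general n s₁ s₂ hs₁ hs₂ q hq
end

section
/- Let p, s be positive integers and δ ∈ {0,1}. Define T̃(p,s,δ) as the coefficient of x^{3s} in ∑_{k=0}^{p-δ} (-1)^k binom(p-k-δ, k-δ) (2-x)^{p-2k} (1+x)^{p+s-k}. Then T̃(p,s,δ) = (-1)^{s+δ} binom(2s+p-2δ+1, 3s+1). -/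
/-- Integer power of a formal power series over `ℚ` (negative powers via the formal inverse,
which is the genuine inverse when the constant term is nonzero). -/
noncomputable def ipow (f : PowerSeries ℚ) (m : ℤ) : PowerSeries ℚ :=
  if 0 ≤ m then f ^ m.toNat else (f ^ (-m).toNat)⁻¹

/-- Binomial coefficient `binom(m, j)` with integer lower index, vanishing for `j < 0`. -/
def ichoose (m : ℕ) (j : ℤ) : ℤ :=
  if j < 0 then 0 else m.choose j.toNat

/-!
Let `U_n` (`lucasSeries n`) be the Lucas sequence of `u = (2 - x)(1 + x)` and `v = 1 + x`
(`U_0 = 0`, `U_1 = 1`, `U_{n+2} = u U_{n+1} - v U_n`). Its explicit binomial expansion shows that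
the sum in question is `(-1)^δ (1 + x)^(s+δ) U_{p+1-2δ}`, so we need the coefficient of `x^{3s}`
in `(1 + x)^r U_n` for `r ∈ {s, s + 1}`.

Transpose: the generating function `G_m(z) = ∑_n [x^m] U_n z^n` (`lucasCoeffSeries m`) satisfies
a three-term recurrence in `m`, whose solution is `(1 - z)^{m+2} G_m = z Q_m` with
`Q_m = U_{m+1}(z, z)`. Hence
`(1 - z)^{3s+2} ∑_n [x^{3s}] (1 + x)^r U_n z^n = z ∑_{i+j=3s} binom(r,i) (1 - z)^i Q_j`, and the
last sum is the coefficient of `y^{3s}` in `(1 + (1 - z) y)^r / (1 - z y + z y^2)`. Pascal's rule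
in `r` and the recurrence of `Q` in the degree give this coefficient as `(-z)^s` by induction on
`s`. Reading off `z^n` from `(-1)^s z^{s+1} / (1 - z)^{3s+2}` gives `(-1)^s binom(2s+n, 3s+1)`.
-/

open PowerSeries Finset

theorem Nat.choose_succ_sub_succ (n k : ℕ) :
    (n + 1 - k).choose (k + 1) = (n - k).choose k + (n - k).choose (k + 1) := by
  rcases le_or_gt k n with h | h
  · rw [show n + 1 - k = n - k + 1 by omega, Nat.choose_succ_succ]
  · simp [show n + 1 - k = 0 by omega, show n - k = 0 by omega,
      Nat.choose_eq_zero_of_lt (show 0 < k by omega)]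

namespace PowerSeries

variable {R : Type*} [CommRing R]

theorem coeff_add_two_mul_quadratic (f : R⟦X⟧) (x y : R) (n : ℕ) :
    coeff (n + 2) (f * (1 - C x * X + C y * X ^ 2)) =
      coeff (n + 2) f - x * coeff (n + 1) f + y * coeff n f := by
  have : f * (1 - C x * X + C y * X ^ 2) = f - C x * (X * f) + C y * (X * (X * f)) := by ring
  rw [this, map_add, map_sub, coeff_C_mul, coeff_C_mul, coeff_succ_X_mul, coeff_succ_X_mul,
    coeff_succ_X_mul]

theorem coeff_one_add_X_pow (r n : ℕ) : coeff n ((1 + X : R⟦X⟧) ^ r) = r.choose n := by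
  have : (1 + X : R⟦X⟧) ^ r = (((1 + Polynomial.X) ^ r : Polynomial R) : R⟦X⟧) := by simp
  rw [this, Polynomial.coeff_coe, Polynomial.coeff_one_add_X_pow]

theorem coeff_one_add_C_mul_X_pow (w : R) (r n : ℕ) :
    coeff n ((1 + C w * X) ^ r) = w ^ n * r.choose n := by
  rw [← rescale_X, ← map_one (rescale w), ← map_add, ← map_pow, coeff_rescale,
    coeff_one_add_X_pow]

theorem coeff_X_pow_mul_invOneSubPow {d k : ℕ} (hk : k ≤ d) (n : ℕ) :
    coeff n ((X : R⟦X⟧) ^ k * (invOneSubPow R (d + 1)).val) = (n + d - k).choose d := by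
  rw [coeff_X_pow_mul', invOneSubPow_val_succ_eq_mk_add_choose, coeff_mk]
  split_ifs with h
  · congr 2; omega
  · rw [Nat.choose_eq_zero_of_lt (by omega), Nat.cast_zero]

end PowerSeries

section Lucas

variable {R : Type*} [CommRing R]

def lucasU (x y : R) : ℕ → R
  | 0 => 0
  | 1 => 1
  | n + 2 => x * lucasU x y (n + 1) - y * lucasU x y n

@[simp] theorem lucasU_zero (x y : R) : lucasU x y 0 = 0 := rfl

@[simp] theorem lucasU_one (x y : R) : lucasU x y 1 = 1 := rfl

theorem lucasU_add_two (x y : R) (n : ℕ) :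
    lucasU x y (n + 2) = x * lucasU x y (n + 1) - y * lucasU x y n := rfl

theorem lucasU_succ_eq_sum (x y : R) (n : ℕ) :
    lucasU x y (n + 1) =
      ∑ k ∈ range (n + 1), (-1) ^ k * ((n - k).choose k : R) * x ^ (n - 2 * k) * y ^ k := by
  set t : ℕ → ℕ → R := fun n k => (-1) ^ k * ((n - k).choose k : R) * x ^ (n - 2 * k) * y ^ k
    with ht
  have step : ∀ n k, t (n + 2) (k + 1) = x * t (n + 1) (k + 1) - y * t n k := by
    intro n k
    -- the exponent `n + 1 - 2 * (k + 1)` is truncated exactly when the binomial vanishes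
    have hpow : ((n - k).choose (k + 1) : R) * x ^ (n - 2 * k) =
        (n - k).choose (k + 1) * (x * x ^ (n + 1 - 2 * (k + 1))) := by
      by_cases h : k + 1 ≤ n - k
      · rw [← pow_succ']; congr 2; omega
      · simp [Nat.choose_eq_zero_of_lt (not_le.mp h)]
    simp only [ht, show n + 2 - (k + 1) = n + 1 - k by omega, Nat.choose_succ_sub_succ,
      show n + 1 - (k + 1) = n - k by omega, show n + 2 - 2 * (k + 1) = n - 2 * k by omega,
      Nat.cast_add]
    linear_combination (-1) ^ (k + 1) * y ^ (k + 1) * hpow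
  induction n using Nat.twoStepInduction with
  | zero => simp
  | one => simp [lucasU_add_two, sum_range_succ]
  | more n ih₀ ih₁ =>
    change lucasU x y (n + 1 + 2) = ∑ k ∈ range (n + 3), t (n + 2) k
    change lucasU x y (n + 1) = ∑ k ∈ range (n + 1), t n k at ih₀
    change lucasU x y (n + 2) = ∑ k ∈ range (n + 2), t (n + 1) k at ih₁
    have hlast : t (n + 2) (n + 2) = 0 := by simp [ht]
    rw [lucasU_add_two, ih₀, ih₁, sum_range_succ' (t (n + 2)) (n + 2),
      sum_range_succ (fun k => t (n + 2) (k + 1)) (n + 1), hlast,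
      sum_range_succ' (t (n + 1)) (n + 1)]
    simp only [step, sum_sub_distrib, ← mul_sum]
    simp [ht, pow_succ]
    ring

theorem lucasU_eq_sum (x y : R) (n : ℕ) :
    lucasU x y n =
      ∑ k ∈ range n, (-1) ^ k * ((n - 1 - k).choose k : R) * x ^ (n - 1 - 2 * k) * y ^ k := by
  rcases n with _ | n
  · simp
  · simpa using lucasU_succ_eq_sum x y n

theorem mk_lucasU_succ_mul (x y : R) :
    PowerSeries.mk (fun n => lucasU x y (n + 1)) * (1 - C x * X + C y * X ^ 2) = 1 := by
  ext (_ | _ | n)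
  · simp [coeff_mul]
  · simp [coeff_mul, Finset.Nat.antidiagonal_succ, lucasU_add_two]
  · rw [coeff_add_two_mul_quadratic]
    simp [lucasU_add_two]

end Lucas

section Convolution

variable {R : Type*} [CommRing R]

noncomputable def lucasConv (x y w : R) (r : ℕ) : R⟦X⟧ :=
  (1 + C w * X) ^ r * PowerSeries.mk fun n => lucasU x y (n + 1)

theorem coeff_lucasConv (x y w : R) (r n : ℕ) :
    coeff n (lucasConv x y w r) =
      ∑ ij ∈ antidiagonal n, (r.choose ij.1 : R) * w ^ ij.1 * lucasU x y (ij.2 + 1) := by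
  simp only [lucasConv, coeff_mul, coeff_one_add_C_mul_X_pow, coeff_mk]
  exact sum_congr rfl fun _ _ => by ring

theorem coeff_lucasConv_succ_succ (x y w : R) (r n : ℕ) :
    coeff (n + 1) (lucasConv x y w (r + 1)) =
      coeff (n + 1) (lucasConv x y w r) + w * coeff n (lucasConv x y w r) := by
  have : lucasConv x y w (r + 1) = lucasConv x y w r + C w * (X * lucasConv x y w r) := by
    simp only [lucasConv, pow_succ]; ring
  rw [this, map_add, coeff_C_mul, coeff_succ_X_mul]

theorem coeff_lucasConv_add_two (x y w : R) {r n : ℕ} (h : r ≤ n + 1) :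
    coeff (n + 2) (lucasConv x y w r) =
      x * coeff (n + 1) (lucasConv x y w r) - y * coeff n (lucasConv x y w r) := by
  have key : lucasConv x y w r * (1 - C x * X + C y * X ^ 2) = (1 + C w * X) ^ r := by
    rw [lucasConv, mul_assoc, mk_lucasU_succ_mul, mul_one]
  have := congrArg (coeff (n + 2)) key
  rw [coeff_add_two_mul_quadratic, coeff_one_add_C_mul_X_pow,
    Nat.choose_eq_zero_of_lt (by omega), Nat.cast_zero, mul_zero] at this
  linear_combination this

theorem coeff_lucasConv_three_mul (c : R) (s : ℕ) :
    coeff (3 * s) (lucasConv c c (1 - c) s) = (-c) ^ s ∧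
      coeff (3 * s + 1) (lucasConv c c (1 - c) s) = (-c) ^ s * c := by
  induction s with
  | zero => simp [coeff_lucasConv, Finset.Nat.antidiagonal_succ, lucasU_add_two]
  | succ s ih =>
    obtain ⟨h₀, h₁⟩ := ih
    have h₂ : coeff (3 * s + 2) (lucasConv c c (1 - c) s) = (-c) ^ s * c * (c - 1) := by
      rw [coeff_lucasConv_add_two _ _ _ (by omega), h₁, h₀]; ring
    have h₃ : coeff (3 * s + 3) (lucasConv c c (1 - c) s) = (-c) ^ s * c ^ 2 * (c - 2) := by
      rw [coeff_lucasConv_add_two _ _ _ (by omega), h₂, h₁]; ring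
    have h₄ : coeff (3 * s + 4) (lucasConv c c (1 - c) s) =
        (-c) ^ s * c ^ 2 * (c ^ 2 - 3 * c + 1) := by
      rw [coeff_lucasConv_add_two _ _ _ (by omega), h₃, h₂]; ring
    rw [show 3 * (s + 1) = 3 * s + 2 + 1 by ring, coeff_lucasConv_succ_succ, h₃, h₂,
      show 3 * s + 2 + 1 + 1 = 3 * s + 3 + 1 by ring, coeff_lucasConv_succ_succ, h₄, h₃]
    constructor <;> ring

theorem coeff_lucasConv_succ_three_mul (c : R) (s : ℕ) :
    coeff (3 * s) (lucasConv c c (1 - c) (s + 1)) = (-c) ^ s := by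
  rcases s with _ | s
  · simp [coeff_lucasConv]
  obtain ⟨h₀, h₁⟩ := coeff_lucasConv_three_mul c s
  obtain ⟨h₃, -⟩ := coeff_lucasConv_three_mul c (s + 1)
  have h₂ : coeff (3 * s + 2) (lucasConv c c (1 - c) (s + 1)) = 0 := by
    rw [coeff_lucasConv_succ_succ, coeff_lucasConv_add_two _ _ _ (by omega), h₀, h₁]; ring
  rw [show 3 * (s + 1) = 3 * s + 2 + 1 by ring, coeff_lucasConv_succ_succ, h₂,
    show 3 * s + 2 + 1 = 3 * (s + 1) by ring, h₃, mul_zero, add_zero]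

theorem sum_antidiagonal_choose_mul_lucasU (c : R) {s ε : ℕ} (hε : ε ≤ 1) :
    ∑ ij ∈ antidiagonal (3 * s), ((s + ε).choose ij.1 : R) * (1 - c) ^ ij.1 *
      lucasU c c (ij.2 + 1) = (-c) ^ s := by
  rw [← coeff_lucasConv]
  interval_cases ε
  exacts [(coeff_lucasConv_three_mul c s).1, coeff_lucasConv_succ_three_mul c s]

end Convolution

section Transpose

variable {R : Type*} [CommRing R]

noncomputable def lucasSeries (n : ℕ) : R⟦X⟧ := lucasU ((2 - X) * (1 + X)) (1 + X) n

noncomputable def lucasCoeffSeries (m : ℕ) : R⟦X⟧ :=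
  PowerSeries.mk fun n => coeff m (lucasSeries (R := R) n)

theorem lucasSeries_add_two (n : ℕ) : (lucasSeries (n + 2) : R⟦X⟧) =
    C 2 * lucasSeries (n + 1) - lucasSeries n + X * (lucasSeries (n + 1) - lucasSeries n) -
      X * (X * lucasSeries (n + 1)) := by
  simp only [lucasSeries, lucasU_add_two, map_ofNat]; ring

theorem one_sub_X_sq_mul (f : R⟦X⟧) : (1 - X) ^ 2 * f = f * (1 - C 2 * X + C 1 * X ^ 2) := by
  simp only [map_ofNat, map_one]; ring

theorem one_sub_X_sq_mul_lucasCoeffSeries_zero :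
    (1 - X) ^ 2 * lucasCoeffSeries 0 = (X : R⟦X⟧) := by
  ext (_ | _ | q)
  · simp [lucasCoeffSeries, lucasSeries, coeff_mul]
  · simp [lucasCoeffSeries, lucasSeries, coeff_mul, Finset.Nat.antidiagonal_succ]
  · rw [one_sub_X_sq_mul, coeff_add_two_mul_quadratic]
    simp [lucasCoeffSeries, lucasSeries_add_two, coeff_X]

theorem one_sub_X_sq_mul_lucasCoeffSeries_one :
    (1 - X) ^ 2 * lucasCoeffSeries 1 = X * ((1 - X) * lucasCoeffSeries (R := R) 0) := by
  ext (_ | _ | q)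
  · simp [lucasCoeffSeries, lucasSeries, coeff_mul]
  · simp [lucasCoeffSeries, lucasSeries, coeff_mul, Finset.Nat.antidiagonal_succ]
  · rw [one_sub_X_sq_mul, coeff_add_two_mul_quadratic]
    simp [lucasCoeffSeries, lucasSeries_add_two, sub_mul]
    ring

theorem one_sub_X_sq_mul_lucasCoeffSeries_add_two (m : ℕ) :
    (1 - X) ^ 2 * lucasCoeffSeries (m + 2) =
      X * ((1 - X) * lucasCoeffSeries (m + 1) - lucasCoeffSeries (R := R) m) := by
  ext (_ | _ | q)
  · simp [lucasCoeffSeries, lucasSeries, coeff_mul]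
  · simp [lucasCoeffSeries, lucasSeries, coeff_mul, Finset.Nat.antidiagonal_succ]
  · rw [one_sub_X_sq_mul, coeff_add_two_mul_quadratic]
    simp [lucasCoeffSeries, lucasSeries_add_two, sub_mul]
    ring

theorem one_sub_X_pow_mul_lucasCoeffSeries (m : ℕ) :
    (1 - X) ^ (m + 2) * lucasCoeffSeries m = X * lucasU (X : R⟦X⟧) X (m + 1) := by
  induction m using Nat.twoStepInduction with
  | zero => simpa using one_sub_X_sq_mul_lucasCoeffSeries_zero (R := R)
  | one =>
    simp only [lucasU_add_two, zero_add, lucasU_one, lucasU_zero]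
    linear_combination (1 - X) * one_sub_X_sq_mul_lucasCoeffSeries_one (R := R) +
      X * one_sub_X_sq_mul_lucasCoeffSeries_zero (R := R)
  | more m ih₀ ih₁ =>
    rw [lucasU_add_two]
    linear_combination (1 - X) ^ (m + 2) * one_sub_X_sq_mul_lucasCoeffSeries_add_two (R := R) m +
      X * ih₁ - X * ih₀

theorem one_sub_X_pow_mul_sum_lucasCoeffSeries {s ε : ℕ} (hε : ε ≤ 1) :
    (1 - X) ^ (3 * s + 2) *
        ∑ ij ∈ antidiagonal (3 * s), (s + ε).choose ij.1 • lucasCoeffSeries ij.2 =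
      ((-1) ^ s * X ^ (s + 1) : R⟦X⟧) := by
  have hterm : ∀ ij ∈ antidiagonal (3 * s), (1 - X) ^ (3 * s + 2) *
      ((s + ε).choose ij.1 • lucasCoeffSeries ij.2) =
        X * (((s + ε).choose ij.1 : R⟦X⟧) * (1 - X) ^ ij.1 * lucasU X X (ij.2 + 1)) := by
    rintro ⟨i, j⟩ hij
    rw [HasAntidiagonal.mem_antidiagonal] at hij
    rw [nsmul_eq_mul, show 3 * s + 2 = i + (j + 2) by omega, pow_add]
    linear_combination (((s + ε).choose i : R⟦X⟧) * (1 - X) ^ i) *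
      one_sub_X_pow_mul_lucasCoeffSeries (R := R) j
  rw [mul_sum, sum_congr rfl hterm, ← mul_sum, sum_antidiagonal_choose_mul_lucasU X hε]
  ring

theorem coeff_one_add_X_pow_mul_lucasSeries {s ε : ℕ} (hε : ε ≤ 1) (n : ℕ) :
    coeff (3 * s) ((1 + X) ^ (s + ε) * lucasSeries n : R⟦X⟧) =
      (-1) ^ s * (2 * s + n).choose (3 * s + 1) := by
  set H : R⟦X⟧ := ∑ ij ∈ antidiagonal (3 * s), (s + ε).choose ij.1 • lucasCoeffSeries ij.2
    with hH
  have hcoeff : coeff (3 * s) ((1 + X) ^ (s + ε) * lucasSeries n : R⟦X⟧) = coeff n H := by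
    rw [coeff_mul, hH, map_sum]
    simp only [map_nsmul, lucasCoeffSeries, coeff_mk, coeff_one_add_X_pow]
    simp only [nsmul_eq_mul]
  have hinv : (invOneSubPow R (3 * s + 2)).val * (1 - X) ^ (3 * s + 2) = 1 := by
    rw [← invOneSubPow_inv_eq_one_sub_pow]; exact (invOneSubPow R _).val_inv
  have hH' : H = (-1) ^ s * X ^ (s + 1) * (invOneSubPow R (3 * s + 2)).val :=
    calc H = (invOneSubPow R (3 * s + 2)).val * ((1 - X) ^ (3 * s + 2) * H) := by
          rw [← mul_assoc, hinv, one_mul]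
      _ = _ := by rw [one_sub_X_pow_mul_sum_lucasCoeffSeries hε]; ring
  have hsign : ((-1) ^ s : R⟦X⟧) = C ((-1) ^ s) := by simp
  rw [hcoeff, hH', mul_assoc, hsign, coeff_C_mul,
    coeff_X_pow_mul_invOneSubPow (by omega : s + 1 ≤ 3 * s + 1),
    show n + (3 * s + 1) - (s + 1) = 2 * s + n by omega]

end Transpose

theorem ipow_natCast (f : ℚ⟦X⟧) (n : ℕ) : ipow f n = f ^ n := by simp [ipow]

theorem sum_ichoose_smul_ipow_eq (p s δ : ℕ) (h : 2 * δ ≤ p + 1) :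
    ∑ k ∈ range (p - δ + 1),
        (((-1) ^ k * ichoose (p - k - δ) ((k : ℤ) - (δ : ℤ)) : ℤ) : ℚ) •
          (ipow (2 - X) ((p : ℤ) - 2 * k) * ipow (1 + X) ((p : ℤ) + (s : ℤ) - k)) =
      (-1) ^ δ * (1 + X) ^ (s + δ) * lucasSeries (p + 1 - 2 * δ) := by
  rw [← sum_range_add_sum_Ico _ (by omega : δ ≤ p - δ + 1), sum_Ico_eq_sum_range,
    sum_eq_zero fun k hk => by simp [ichoose, mem_range.mp hk], zero_add,
    show p - δ + 1 - δ = p + 1 - 2 * δ by omega, lucasSeries, lucasU_eq_sum, mul_sum]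
  refine sum_congr rfl fun j hj => ?_
  have hj := mem_range.mp hj
  have hich : ichoose (p - (δ + j) - δ) (((δ + j : ℕ) : ℤ) - δ) =
      (p + 1 - 2 * δ - 1 - j).choose j := by
    rw [ichoose, if_neg (by omega)]
    congr 2 <;> omega
  rw [hich]
  by_cases hpos : 2 * j ≤ p + 1 - 2 * δ - 1
  · rw [show (p : ℤ) - 2 * ((δ + j : ℕ) : ℤ) = ((p + 1 - 2 * δ - 1 - 2 * j : ℕ) : ℤ) by omega,
      show (p : ℤ) + s - ((δ + j : ℕ) : ℤ) =
        ((p + 1 - 2 * δ - 1 - 2 * j + j + s + δ : ℕ) : ℤ) by omega,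
      ipow_natCast, ipow_natCast, smul_eq_C_mul]
    simp only [Int.cast_mul, Int.cast_pow, Int.cast_neg, Int.cast_one, Int.cast_natCast, map_mul,
      map_pow, map_neg, map_one, map_natCast, mul_pow]
    ring
  · rw [Nat.choose_eq_zero_of_lt (by omega)]
    simp

theorem stmt_18_general (p s : ℕ) (hp : 1 ≤ p) (δ : ℕ) (hδ : δ ≤ 1) :
    PowerSeries.coeff (R := ℚ) (3 * s)
      (∑ k ∈ Finset.range (p - δ + 1),
        (((-1) ^ k * ichoose (p - k - δ) ((k : ℤ) - (δ : ℤ)) : ℤ) : ℚ) •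
          (ipow (2 - PowerSeries.X) ((p : ℤ) - 2 * k) *
            ipow (1 + PowerSeries.X) ((p : ℤ) + (s : ℤ) - k)))
      = (-1) ^ (s + δ) * (Nat.choose (2 * s + p + 1 - 2 * δ) (3 * s + 1) : ℚ) := by
  have hsign : ((-1) ^ δ : ℚ⟦X⟧) = C ((-1) ^ δ) := by simp
  rw [sum_ichoose_smul_ipow_eq p s δ (by omega), mul_assoc, hsign, coeff_C_mul,
    coeff_one_add_X_pow_mul_lucasSeries hδ,
    show 2 * s + (p + 1 - 2 * δ) = 2 * s + p + 1 - 2 * δ by omega]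
  ring

theorem stmt_18 (p s : ℕ) (hp : 1 ≤ p) (hs : 1 ≤ s) (δ : ℕ) (hδ : δ ≤ 1) :
    PowerSeries.coeff (R := ℚ) (3 * s)
      (∑ k ∈ Finset.range (p - δ + 1),
        (((-1) ^ k * ichoose (p - k - δ) ((k : ℤ) - (δ : ℤ)) : ℤ) : ℚ) •
          (ipow (2 - PowerSeries.X) ((p : ℤ) - 2 * k) *
            ipow (1 + PowerSeries.X) ((p : ℤ) + (s : ℤ) - k)))
      = (-1) ^ (s + δ) * (Nat.choose (2 * s + p + 1 - 2 * δ) (3 * s + 1) : ℚ) :=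
  stmt_18_general p s hp δ hδ
end
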